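/- For n ≥ 3, the set of prefixes of length f_{2(n−1)} − 1 of words in B_n equals the set of prefixes of length f_{2(n−1)} − 1 of words in A_n; that is, B_n[1, f_{2(n−1)}−1] = A_n[1, f_{2(n−1)}−1]. -/
import Mathlib


/-- The two-letter alphabet. -/
inductive Letter : Type
  | a : Letter
  | b : Letter
deriving DecidableEq

/-- A word is a finite sequence of letters. -/
abbrev Word := List Letter

/-- Concatenation set `UV = {uv : u ∈ U, v ∈ V}`. -/
def concatSet (U V : Set Word) : Set Word := {w | ∃ u ∈ U, ∃ v ∈ V, w = u ++ v}

mutual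
  /-- The sets `A_n` of inflated words (indexed so that `Aset 1 = {a}`). -/
  def Aset : ℕ → Set Word
    | 0 => ∅
    | 1 => {[Letter.a]}
    | n + 2 => concatSet (Bset (n + 1)) (concatSet (Aset (n + 1)) (Aset (n + 1)))
  /-- The sets `B_n` of inflated words (indexed so that `Bset 1 = {b}`). -/
  def Bset : ℕ → Set Word
    | 0 => ∅
    | 1 => {[Letter.b]}
    | n + 2 => concatSet (Aset (n + 1)) (Bset (n + 1)) ∪ concatSet (Bset (n + 1)) (Aset (n + 1))
end

/-- The sub-word `w[a,b] = w_a w_{a+1} … w_b` (1-indexed). -/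
def wordSlice (w : Word) (i j : ℕ) : Word := (w.drop (i - 1)).take (j - i + 1)

/-- `W[a,b] = {w[a,b] : w ∈ W}`. -/
def setSlice (W : Set Word) (i j : ℕ) : Set Word := {x | ∃ w ∈ W, x = wordSlice w i j}

/-- `x` is a sub-word (contiguous factor) of `w`. -/
def IsFactor (x w : Word) : Prop := ∃ u v : Word, w = u ++ x ++ v

/-- `F(S, m)`: the set of all sub-words of length `m` of words in `S`. -/
def FactorSet (S : Set Word) (m : ℕ) : Set Word :=
  {x | x.length = m ∧ ∃ w ∈ S, IsFactor x w}

/-- `F(A, m) = ⋃_{n ≥ 1} F(A_n, m)`. -/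
def FA (m : ℕ) : Set Word := ⋃ n ∈ {n : ℕ | 1 ≤ n}, FactorSet (Aset n) m

/-- `F(B, m) = ⋃_{n ≥ 1} F(B_n, m)`. -/
def FB (m : ℕ) : Set Word := ⋃ n ∈ {n : ℕ | 1 ≤ n}, FactorSet (Bset n) m

/-- The golden mean `τ = (1 + √5)/2`. -/
noncomputable def tau : ℝ := (1 + Real.sqrt 5) / 2


namespace PrefHelp

/-- Prefix set: length-`L` prefixes of words in `W`. -/
def pre (W : Set Word) (L : ℕ) : Set Word := {x | ∃ w ∈ W, x = w.take L}

lemma concat_assoc (U V W : Set Word) :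
    concatSet (concatSet U V) W = concatSet U (concatSet V W) := by
  ext x
  constructor
  · rintro ⟨_, ⟨u, hu, v, hv, rfl⟩, w, hw, rfl⟩
    exact ⟨u, hu, v ++ w, ⟨v, hv, w, hw, rfl⟩, by simp⟩
  · rintro ⟨u, hu, _, ⟨v, hv, w, hw, rfl⟩, rfl⟩
    exact ⟨u ++ v, ⟨u, hu, v, hv, rfl⟩, w, hw, by simp⟩

lemma concat_mono {U U' V V' : Set Word} (h1 : U ⊆ U') (h2 : V ⊆ V') :
    concatSet U V ⊆ concatSet U' V' := by
  rintro x ⟨u, hu, v, hv, rfl⟩; exact ⟨u, h1 hu, v, h2 hv, rfl⟩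

lemma pre_union (U V : Set Word) (L : ℕ) : pre (U ∪ V) L = pre U L ∪ pre V L := by
  ext x; constructor
  · rintro ⟨w, hw | hw, rfl⟩
    exacts [Or.inl ⟨w, hw, rfl⟩, Or.inr ⟨w, hw, rfl⟩]
  · rintro (⟨w, hw, rfl⟩ | ⟨w, hw, rfl⟩)
    exacts [⟨w, Or.inl hw, rfl⟩, ⟨w, Or.inr hw, rfl⟩]

lemma pre_concat_of_len {U V : Set Word} {ℓ L : ℕ} (hU : ∀ u ∈ U, u.length = ℓ)
    (h : ℓ ≤ L) : pre (concatSet U V) L = concatSet U (pre V (L - ℓ)) := by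
  ext x; constructor
  · rintro ⟨_, ⟨u, hu, v, hv, rfl⟩, rfl⟩
    refine ⟨u, hu, v.take (L - ℓ), ⟨v, hv, rfl⟩, ?_⟩
    rw [List.take_append, hU u hu,
      List.take_of_length_le (le_of_eq_of_le (hU u hu) h)]
  · rintro ⟨u, hu, _, ⟨v, hv, rfl⟩, rfl⟩
    refine ⟨u ++ v, ⟨u, hu, v, hv, rfl⟩, ?_⟩
    rw [List.take_append, hU u hu,
      List.take_of_length_le (le_of_eq_of_le (hU u hu) h)]

lemma pre_concat_of_le {U V : Set Word} {L : ℕ} (hU : ∀ u ∈ U, L ≤ u.length)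
    (hV : V.Nonempty) : pre (concatSet U V) L = pre U L := by
  ext x; constructor
  · rintro ⟨_, ⟨u, hu, v, hv, rfl⟩, rfl⟩
    exact ⟨u, hu, List.take_append_of_le_length (hU u hu)⟩
  · rintro ⟨u, hu, rfl⟩
    obtain ⟨v, hv⟩ := hV
    exact ⟨u ++ v, ⟨u, hu, v, hv, rfl⟩, (List.take_append_of_le_length (hU u hu)).symm⟩

/-- Lengths of words: `|A_{n+1}| = f_{2n+2}`, `|B_{n+1}| = f_{2n+1}`. -/
lemma length_AB : ∀ n : ℕ, (∀ w ∈ Aset (n+1), w.length = Nat.fib (2*n+2)) ∧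
    (∀ w ∈ Bset (n+1), w.length = Nat.fib (2*n+1)) := by
  intro n
  induction n with
  | zero =>
    constructor
    · rintro w hw; simp only [Aset, Set.mem_singleton_iff] at hw; simp [hw]
    · rintro w hw; simp only [Bset, Set.mem_singleton_iff] at hw; simp [hw]
  | succ n ih =>
    obtain ⟨hA, hB⟩ := ih
    have e4 : Nat.fib (2*(n+1)+2) = Nat.fib (2*n+2) + Nat.fib (2*n+3) := by
      rw [show 2*(n+1)+2 = (2*n+2)+2 by ring]; exact Nat.fib_add_two
    have e3 : Nat.fib (2*(n+1)+1) = Nat.fib (2*n+1) + Nat.fib (2*n+2) := by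
      rw [show 2*(n+1)+1 = (2*n+1)+2 by ring]; exact Nat.fib_add_two
    have e3' : Nat.fib (2*n+3) = Nat.fib (2*n+1) + Nat.fib (2*n+2) := by
      rw [show 2*n+3 = (2*n+1)+2 by ring]; exact Nat.fib_add_two
    constructor
    · rintro w ⟨v, hv, _, ⟨u1, h1, u2, h2, rfl⟩, rfl⟩
      have := hB v hv; have := hA u1 h1; have := hA u2 h2
      simp only [List.length_append]
      omega
    · rintro w (⟨u, hu, v, hv, rfl⟩ | ⟨v, hv, u, hu, rfl⟩) <;>
      · have := hA u hu; have := hB v hv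
        simp only [List.length_append]; omega

lemma nonempty_AB : ∀ n : ℕ, (Aset (n+1)).Nonempty ∧ (Bset (n+1)).Nonempty := by
  intro n
  induction n with
  | zero => exact ⟨⟨[Letter.a], rfl⟩, ⟨[Letter.b], rfl⟩⟩
  | succ n ih =>
    obtain ⟨⟨wa, ha⟩, ⟨wb, hb⟩⟩ := ih
    exact ⟨⟨wb ++ (wa ++ wa), wb, hb, wa ++ wa, ⟨wa, ha, wa, ha, rfl⟩, rfl⟩,
      ⟨wa ++ wb, Or.inl ⟨wa, ha, wb, hb, rfl⟩⟩⟩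

lemma pre_mono {U V : Set Word} (h : U ⊆ V) (L : ℕ) : pre U L ⊆ pre V L := by
  rintro x ⟨w, hw, rfl⟩; exact ⟨w, h hw, rfl⟩

lemma lenA' (k : ℕ) : ∀ u ∈ Aset (k+2), u.length = Nat.fib (2*k+4) := by
  have h := (length_AB (k+1)).1
  simpa [show 2*(k+1)+2 = 2*k+4 from by ring] using h

lemma lenB' (k : ℕ) : ∀ u ∈ Bset (k+2), u.length = Nat.fib (2*k+3) := by
  have h := (length_AB (k+1)).2
  simpa [show 2*(k+1)+1 = 2*k+3 from by ring] using h

lemma Aset_unfold (k : ℕ) : Aset (k+2) =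
    concatSet (Bset (k+1)) (concatSet (Aset (k+1)) (Aset (k+1))) := rfl

lemma Bset_unfold (k : ℕ) : Bset (k+2) =
    concatSet (Aset (k+1)) (Bset (k+1)) ∪ concatSet (Bset (k+1)) (Aset (k+1)) := rfl

/-- Key: `pre (Aset (k+3)) (fib(2k+4)-1)` splits off the leading `B` block. -/
lemma preA_split (k : ℕ) : pre (Aset (k+3)) (Nat.fib (2*k+4) - 1) =
    concatSet (Bset (k+2)) (pre (Aset (k+2)) (Nat.fib (2*k+2) - 1)) := by
  have p2 : 0 < Nat.fib (2*k+2) := Nat.fib_pos.mpr (by omega)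
  have p3 : 0 < Nat.fib (2*k+3) := Nat.fib_pos.mpr (by omega)
  have s4 : Nat.fib (2*k+4) = Nat.fib (2*k+2) + Nat.fib (2*k+3) := by
    rw [show 2*k+4 = (2*k+2)+2 by ring]; exact Nat.fib_add_two
  rw [Aset_unfold (k+1), pre_concat_of_len (lenB' k) (by omega)]
  rw [show Nat.fib (2*k+4) - 1 - Nat.fib (2*k+3) = Nat.fib (2*k+2) - 1 by omega]
  rw [pre_concat_of_le (fun u hu => by rw [lenA' k u hu]; omega)
    (nonempty_AB (k+1)).1]

/-- The central inductive claim: prefixes of `A_{k+2}` with the last letter removed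
can be written as a full `B_{k+2}` word followed by a prefix of `A_{k+2}`. -/
lemma claimC : ∀ k : ℕ, pre (Aset (k+2)) (Nat.fib (2*k+4) - 1) ⊆
    concatSet (Bset (k+2)) (pre (Aset (k+2)) (Nat.fib (2*k+2) - 1)) := by
  intro k
  induction k with
  | zero =>
    rintro x ⟨w, ⟨v, hv, _, ⟨u1, h1, u2, h2, rfl⟩, rfl⟩, rfl⟩
    simp only [Aset, Bset, Set.mem_singleton_iff] at hv h1 h2
    subst hv; subst h1; subst h2
    refine ⟨[Letter.b, Letter.a],
      Or.inr ⟨[Letter.b], rfl, [Letter.a], rfl, rfl⟩,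
      [], ⟨[Letter.b] ++ ([Letter.a] ++ [Letter.a]),
        ⟨[Letter.b], rfl, [Letter.a] ++ [Letter.a],
          ⟨[Letter.a], rfl, [Letter.a], rfl, rfl⟩, rfl⟩, by decide⟩, by decide⟩
  | succ k ih =>
    have p2 : 0 < Nat.fib (2*k+2) := Nat.fib_pos.mpr (by omega)
    have p3 : 0 < Nat.fib (2*k+3) := Nat.fib_pos.mpr (by omega)
    have p4 : 0 < Nat.fib (2*k+4) := Nat.fib_pos.mpr (by omega)
    have s4 : Nat.fib (2*k+4) = Nat.fib (2*k+2) + Nat.fib (2*k+3) := by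
      rw [show 2*k+4 = (2*k+2)+2 by ring]; exact Nat.fib_add_two
    have s5 : Nat.fib (2*k+5) = Nat.fib (2*k+3) + Nat.fib (2*k+4) := by
      rw [show 2*k+5 = (2*k+3)+2 by ring]; exact Nat.fib_add_two
    have s6 : Nat.fib (2*k+6) = Nat.fib (2*k+4) + Nat.fib (2*k+5) := by
      rw [show 2*k+6 = (2*k+4)+2 by ring]; exact Nat.fib_add_two
    simp only [show 2*(k+1)+4 = 2*k+6 from by ring, show 2*(k+1)+2 = 2*k+4 from by ring,
      show k+1+2 = k+3 from rfl]
    have E1 : pre (Aset (k+3)) (Nat.fib (2*k+6) - 1) =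
        concatSet (Bset (k+2)) (concatSet (Aset (k+2))
          (pre (Aset (k+2)) (Nat.fib (2*k+4) - 1))) := by
      rw [Aset_unfold (k+1), pre_concat_of_len (lenB' k) (by omega),
        pre_concat_of_len (lenA' k) (by omega)]
      rw [show Nat.fib (2*k+6) - 1 - Nat.fib (2*k+3) - Nat.fib (2*k+4)
        = Nat.fib (2*k+4) - 1 by omega]
    intro x hx
    rw [E1] at hx
    have hx' : x ∈ concatSet (Bset (k+2)) (concatSet (Aset (k+2))
        (concatSet (Bset (k+2)) (pre (Aset (k+2)) (Nat.fib (2*k+2) - 1)))) :=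
      concat_mono (subset_refl _) (concat_mono (subset_refl _) ih) hx
    rw [← concat_assoc] at hx'
    rw [preA_split k]
    exact concat_mono (fun y hy => Or.inr hy) (subset_refl _) hx'

lemma setSlice_one (W : Set Word) (j : ℕ) (h : 1 ≤ j) : setSlice W 1 j = pre W j := by
  have hw : ∀ w : Word, wordSlice w 1 j = w.take j := by
    intro w; unfold wordSlice
    simp [show j - 1 + 1 = j from by omega]
  unfold setSlice pre
  simp only [hw]

end PrefHelp

open PrefHelp in
theorem prefix_Bset_eq_Aset (n : ℕ) (hn : 3 ≤ n) :
    setSlice (Bset n) 1 (Nat.fib (2 * (n - 1)) - 1) =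
      setSlice (Aset n) 1 (Nat.fib (2 * (n - 1)) - 1) := by
  
  obtain ⟨k, rfl⟩ : ∃ k, n = k + 3 := ⟨n - 3, by omega⟩
  have p2 : 0 < Nat.fib (2*k+2) := Nat.fib_pos.mpr (by omega)
  have p3 : 0 < Nat.fib (2*k+3) := Nat.fib_pos.mpr (by omega)
  have s4 : Nat.fib (2*k+4) = Nat.fib (2*k+2) + Nat.fib (2*k+3) := by
    rw [show 2*k+4 = (2*k+2)+2 by ring]; exact Nat.fib_add_two
  rw [show 2 * (k + 3 - 1) = 2*k+4 by omega]
  have hj : 1 ≤ Nat.fib (2*k+4) - 1 := by omega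
  rw [setSlice_one _ _ hj, setSlice_one _ _ hj, preA_split k]
  rw [Bset_unfold (k+1), pre_union]
  rw [pre_concat_of_le (fun u hu => by rw [lenA' k u hu]; omega) (nonempty_AB (k+1)).2]
  rw [pre_concat_of_len (lenB' k) (by omega),
    show Nat.fib (2*k+4) - 1 - Nat.fib (2*k+3) = Nat.fib (2*k+2) - 1 by omega]
  exact Set.union_eq_right.mpr (claimC k)
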